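/- With probability at least 1 − n^{−3}, the number of nodes v ∈ V \ {d} whose first failover edge (v, π_v(1)) is failed by the adversary (i.e., lies in F^in) is O(log n), even if the adversary fails up to γ·n inner edges for a constant γ < 1. -/

import Mathlib

/-!
STATEMENT 8 (Lemma 7, few failed first failover edges).

Fix a destination `d` in `K_n`.  The adversary, oblivious to the random choices,
fails a set `Fin'` of inner edges (edges not incident to `d`, no self-loops) with
`|Fin'| ≤ γ·n` for a constant `0 < γ < 1`.  Each node `v` independently chooses a
uniformly random ordering `π_v` of `V \ {d}`; `π_v(1)` denotes its first element.

Claim: with probability at least `1 - n⁻³`, the number of nodes `v ∈ V \ {d}` with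
`(v, π_v(1)) ∈ Fin'` is `O(log n)`.
-/

open scoped Classical
open Finset

noncomputable section

/-- `lg` denotes the base-2 logarithm (the paper's `log`). -/
def lg (x : ℝ) : ℝ := Real.logb 2 x

abbrev NodeOrder (n : ℕ) (d : Fin n) : Type := Fin (n - 1) ≃ {v : Fin n // v ≠ d}

def unifProb {Ω : Type*} [Fintype Ω] (P : Ω → Prop) : ℝ :=
  ((Finset.univ : Finset Ω).filter P).card / (Fintype.card Ω : ℝ)

/-- The first element `π_v(1)` of an ordering of `V \ {d}`. -/
def firstElem {n : ℕ} {d : Fin n} (π : NodeOrder n d) : Fin n :=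
  if h : 0 < n - 1 then (π ⟨0, h⟩).1 else d

/-!
Let `X` count the nodes whose first failover edge is failed. Since `π_v(1)` is uniform on
`V \ {d}`, node `v` is hit with probability `p_v ≤ deg_F(v) / (n - 1)`, so
`∑ p_v ≤ 2|F| / (n - 1) ≤ 4` as `|F| < n`. The choices are independent, hence
`E[2^X] = ∏ (1 + p_v) ≤ exp (∑ p_v) ≤ e⁴`, and Markov's inequality for `2^X` at the threshold
`2^(4 log n) = n⁴` leaves a failure probability of at most `e⁴ / n⁴ ≤ n⁻³` once `n ≥ e⁴`.
-/

open Real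

section UniformProbability

variable {Ω : Type*} [Fintype Ω]

lemma unifProb_eq_card_div (P : Ω → Prop) [DecidablePred P] :
    unifProb P = #{ω | P ω} / Fintype.card Ω := by
  unfold unifProb
  congr!

lemma unifProb_nonneg (P : Ω → Prop) : 0 ≤ unifProb P := by
  unfold unifProb
  positivity

lemma unifProb_mono {P Q : Ω → Prop} (h : ∀ ω, P ω → Q ω) : unifProb P ≤ unifProb Q := by
  unfold unifProb
  gcongr
  exact h _

lemma unifProb_not [Nonempty Ω] (P : Ω → Prop) :
    unifProb (fun ω => ¬ P ω) = 1 - unifProb P := by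
  unfold unifProb
  rw [eq_sub_iff_add_eq, ← add_div, div_eq_one_iff_eq (by positivity), ← Nat.cast_add,
    add_comm, card_filter_add_card_filter_not, card_univ]

lemma unifProb_mul_le_of_le {P : Ω → Prop} {f : Ω → ℝ} {a : ℝ} (hf : ∀ ω, 0 ≤ f ω)
    (haf : ∀ ω, P ω → a ≤ f ω) : unifProb P * a ≤ (∑ ω, f ω) / Fintype.card Ω := by
  unfold unifProb
  rw [div_mul_eq_mul_div]
  gcongr
  calc (#{ω | P ω} : ℝ) * a = ∑ ω with P ω, a := by simp
    _ ≤ ∑ ω with P ω, f ω := sum_le_sum fun ω hω => haf ω (mem_filter.1 hω).2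
    _ ≤ ∑ ω, f ω := sum_le_sum_of_subset_of_nonneg (filter_subset _ _) fun ω _ _ => hf ω

lemma sum_ite_two_one [Nonempty Ω] (P : Ω → Prop) [DecidablePred P] :
    ∑ ω, (if P ω then (2 : ℝ) else 1) = Fintype.card Ω * (1 + unifProb P) := by
  calc ∑ ω, (if P ω then (2 : ℝ) else 1) = ∑ ω, (1 + if P ω then 1 else 0) :=
        sum_congr rfl fun ω _ => by split_ifs <;> norm_num
    _ = Fintype.card Ω + #{ω | P ω} := by simp [sum_add_distrib]
    _ = Fintype.card Ω * (1 + unifProb P) := by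
        rw [unifProb_eq_card_div]
        field_simp

end UniformProbability

section Chernoff

variable {ι : Type*} [Fintype ι] [DecidableEq ι] {Ω : ι → Type*} [∀ i, Fintype (Ω i)]
  [∀ i, Nonempty (Ω i)]

lemma sum_two_pow_card_div_card_eq_prod (E : ∀ i, Ω i → Prop) [∀ i, DecidablePred (E i)] :
    (∑ ω : ∀ i, Ω i, (2 : ℝ) ^ #{i | E i (ω i)}) / Fintype.card (∀ i, Ω i)
      = ∏ i, (1 + unifProb (E i)) := by
  have h2 : ∀ ω : ∀ i, Ω i, (2 : ℝ) ^ #{i | E i (ω i)} = ∏ i, if E i (ω i) then 2 else 1 := by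
    intro ω
    rw [prod_ite, prod_const, prod_const_one, mul_one]
  rw [sum_congr rfl fun ω _ => h2 ω, ← Fintype.prod_sum fun i x => if E i x then (2 : ℝ) else 1,
    Fintype.card_pi, Nat.cast_prod, ← prod_div_distrib]
  refine prod_congr rfl fun i _ => ?_
  rw [sum_ite_two_one, mul_div_cancel_left₀ _ (by positivity)]

theorem one_sub_exp_div_le_unifProb_card_le (E : ∀ i, Ω i → Prop) [∀ i, DecidablePred (E i)]
    (t : ℝ) :
    1 - exp (∑ i, unifProb (E i)) / 2 ^ t
      ≤ unifProb (fun ω : ∀ i, Ω i => (#{i | E i (ω i)} : ℝ) ≤ t) := by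
  have markov : unifProb (fun ω : ∀ i, Ω i => t < #{i | E i (ω i)}) * 2 ^ t
      ≤ exp (∑ i, unifProb (E i)) :=
    calc _ ≤ (∑ ω : ∀ i, Ω i, (2 : ℝ) ^ #{i | E i (ω i)}) / Fintype.card (∀ i, Ω i) :=
          unifProb_mul_le_of_le (fun _ => by positivity) fun ω h => by
            rw [← rpow_natCast]
            exact rpow_le_rpow_of_exponent_le one_le_two h.le
      _ = ∏ i, (1 + unifProb (E i)) := sum_two_pow_card_div_card_eq_prod E
      _ ≤ ∏ i, exp (unifProb (E i)) :=
          prod_le_prod (fun i _ => by linarith [unifProb_nonneg (E i)])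
            fun i _ => by linarith [add_one_le_exp (unifProb (E i))]
      _ = exp (∑ i, unifProb (E i)) := (exp_sum _ _).symm
  have hcompl := unifProb_not (fun ω : ∀ i, Ω i => t < #{i | E i (ω i)})
  simp only [not_lt] at hcompl
  rw [hcompl, sub_le_sub_iff_left, le_div_iff₀ (by positivity)]
  exact markov

end Chernoff

section RandomEquiv

variable {α β : Type*} [Fintype α] [Fintype β] [DecidableEq α] [DecidableEq β]

lemma card_filter_equiv_apply_eq_eq (a : α) (b b' : β) :
    #{σ : α ≃ β | σ a = b} = #{σ : α ≃ β | σ a = b'} := by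
  refine card_nbij' (fun σ => σ.trans (Equiv.swap b b')) (fun σ => σ.trans (Equiv.swap b b'))
    ?_ ?_ ?_ ?_ <;> intro σ hσ
  · simp_all
  · simp_all
  · ext; simp
  · ext; simp

lemma card_filter_equiv_apply_mem_mul_card (a : α) (B : Finset β) :
    #{σ : α ≃ β | σ a ∈ B} * Fintype.card β = #B * Fintype.card (α ≃ β) := by
  rcases isEmpty_or_nonempty β with hβ | ⟨⟨b₀⟩⟩
  · simp [eq_empty_of_isEmpty B]
  have hfibers : ∀ B : Finset β, #{σ : α ≃ β | σ a ∈ B} = #B * #{σ : α ≃ β | σ a = b₀} := by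
    intro B
    rw [← sum_card_fiberwise_eq_card_filter univ B fun σ : α ≃ β => σ a,
      sum_congr rfl fun b _ => card_filter_equiv_apply_eq_eq a b b₀, sum_const, smul_eq_mul]
  have huniv := hfibers univ
  simp only [mem_univ, filter_true, card_univ] at huniv
  rw [hfibers, huniv]
  ring

end RandomEquiv

lemma sum_card_filter_mk_mem_le_two_mul {V : Type*} [Fintype V] [DecidableEq V]
    (F : Finset (Sym2 V)) :
    ∑ v, #{u | s(v, u) ∈ F} ≤ 2 * #F := by
  have hpairs : ∑ v, #{u | s(v, u) ∈ F} = #{p : V × V | s(p.1, p.2) ∈ F} := by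
    simp only [card_filter, ← Fintype.sum_prod_type']
  rw [hpairs]
  refine card_le_mul_card_image_of_maps_to (fun p hp => (mem_filter.1 hp).2) 2 fun e _ => ?_
  induction e using Sym2.inductionOn with
  | hf a b =>
    calc #{p ∈ ({p : V × V | s(p.1, p.2) ∈ F} : Finset _) | s(p.1, p.2) = s(a, b)}
        ≤ #({(a, b), (b, a)} : Finset (V × V)) := by
          refine card_le_card fun p hp => ?_
          rcases Sym2.eq_iff.1 (mem_filter.1 hp).2 with ⟨rfl, rfl⟩ | ⟨rfl, rfl⟩ <;> simp
      _ ≤ 2 := card_le_two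

lemma card_subtype_ne {n : ℕ} (d : Fin n) : Fintype.card {v : Fin n // v ≠ d} = n - 1 := by
  simp [Fintype.card_subtype_compl]

instance (n : ℕ) (d : Fin n) : Nonempty (NodeOrder n d) :=
  ⟨Fintype.equivOfCardEq (by rw [Fintype.card_fin, card_subtype_ne])⟩

lemma unifProb_firstElem_le {n : ℕ} {d : Fin n} (hn : 2 ≤ n) (P : Fin n → Prop)
    [DecidablePred P] :
    unifProb (fun σ : NodeOrder n d => P (firstElem σ)) ≤ #{u | P u} / ((n : ℝ) - 1) := by
  have hpos : 0 < n - 1 := by omega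
  set B : Finset {v : Fin n // v ≠ d} := ({u | P u} : Finset (Fin n)).subtype (· ≠ d)
  have hfirst : ∀ σ : NodeOrder n d, P (firstElem σ) ↔ σ ⟨0, hpos⟩ ∈ B := fun σ => by
    simp [B, firstElem, hpos]
  have huniform := card_filter_equiv_apply_mem_mul_card (⟨0, hpos⟩ : Fin (n - 1)) B
  rw [card_subtype_ne, ← Nat.cast_inj (R := ℝ), Nat.cast_mul, Nat.cast_mul,
    Nat.cast_sub (by omega), Nat.cast_one] at huniform
  unfold unifProb
  simp only [hfirst]
  rw [div_le_div_iff₀ (by positivity) (sub_pos.2 (by exact_mod_cast hn)), huniform]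
  gcongr
  rw [card_subtype]
  exact_mod_cast card_filter_le _ _

lemma sum_unifProb_mk_firstElem_mem_le {n : ℕ} (d : Fin n) (hn : 2 ≤ n)
    (F : Finset (Sym2 (Fin n))) :
    ∑ v, unifProb (fun σ : NodeOrder n d => s(v, firstElem σ) ∈ F) ≤ 2 * #F / ((n : ℝ) - 1) :=
  calc _ ≤ ∑ v, (#{u | s(v, u) ∈ F} : ℝ) / ((n : ℝ) - 1) :=
        sum_le_sum fun v _ => unifProb_firstElem_le hn (fun u => s(v, u) ∈ F)
    _ = ((∑ v, #{u | s(v, u) ∈ F} : ℕ) : ℝ) / ((n : ℝ) - 1) := by push_cast; rw [sum_div]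
    _ ≤ 2 * #F / ((n : ℝ) - 1) := by
        have hn' : (0 : ℝ) ≤ n - 1 := by linarith [show (2 : ℝ) ≤ n by exact_mod_cast hn]
        gcongr
        exact_mod_cast sum_card_filter_mk_mem_le_two_mul F

lemma two_rpow_mul_lg {x : ℝ} (hx : 0 < x) (k : ℕ) : (2 : ℝ) ^ (k * lg x) = x ^ k := by
  rw [lg, mul_comm, rpow_mul zero_le_two, rpow_logb two_pos (by norm_num) hx, rpow_natCast]

theorem few_failed_first_failover_edges_general (γ : ℝ) (hγ1 : γ < 1) :
    ∃ (D : ℝ) (N : ℕ), 0 < D ∧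
      ∀ n : ℕ, N ≤ n →
        ∀ (d : Fin n) (Fin' : Finset (Sym2 (Fin n))),
          (∀ e ∈ Fin', ¬ e.IsDiag) →
          -- inner edges: not incident to the destination
          (∀ e ∈ Fin', d ∉ e) →
          (Fin'.card : ℝ) ≤ γ * n →
          1 - 1 / (n : ℝ) ^ 3 ≤
            unifProb (fun ω : Fin n → NodeOrder n d =>
              (((Finset.univ.erase d).filter fun v : Fin n =>
                  s(v, firstElem (ω v)) ∈ Fin').card : ℝ) ≤ D * lg n) := by
  refine ⟨4, max 2 ⌈exp 4⌉₊, by norm_num, fun n hn d F _ _ hF => ?_⟩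
  have hn2 : 2 ≤ n := le_of_max_le_left hn
  have hexp : exp 4 ≤ n := Nat.ceil_le.1 (le_of_max_le_right hn)
  have hnR : (2 : ℝ) ≤ n := by exact_mod_cast hn2
  have hmean : ∑ v, unifProb (fun σ : NodeOrder n d => s(v, firstElem σ) ∈ F) ≤ 4 := by
    refine (sum_unifProb_mk_firstElem_mem_le d hn2 F).trans ?_
    rw [div_le_iff₀ (by linarith)]
    nlinarith
  have hpow : (2 : ℝ) ^ (4 * lg n) = (n : ℝ) ^ 4 := by
    exact_mod_cast two_rpow_mul_lg (x := n) (by linarith) 4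
  calc 1 - 1 / (n : ℝ) ^ 3 ≤ 1 - exp 4 / 2 ^ (4 * lg n) := by
        rw [hpow, sub_le_sub_iff_left, div_le_div_iff₀ (by positivity) (by positivity)]
        calc exp 4 * (n : ℝ) ^ 3 ≤ n * (n : ℝ) ^ 3 := by gcongr
          _ = 1 * (n : ℝ) ^ 4 := by ring
    _ ≤ 1 - exp (∑ v, unifProb fun σ : NodeOrder n d => s(v, firstElem σ) ∈ F)
          / 2 ^ (4 * lg n) := by gcongr
    _ ≤ unifProb fun ω : Fin n → NodeOrder n d =>
          (#{v | s(v, firstElem (ω v)) ∈ F} : ℝ) ≤ 4 * lg n :=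
        one_sub_exp_div_le_unifProb_card_le (fun v σ => s(v, firstElem σ) ∈ F) _
    _ ≤ _ := unifProb_mono fun ω hω => le_trans (by
          exact_mod_cast card_le_card (filter_subset_filter _ (erase_subset d univ))) hω

theorem few_failed_first_failover_edges (γ : ℝ) (hγ0 : 0 < γ) (hγ1 : γ < 1) :
    ∃ (D : ℝ) (N : ℕ), 0 < D ∧
      ∀ n : ℕ, N ≤ n →
        ∀ (d : Fin n) (Fin' : Finset (Sym2 (Fin n))),
          (∀ e ∈ Fin', ¬ e.IsDiag) →
          -- inner edges: not incident to the destination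
          (∀ e ∈ Fin', d ∉ e) →
          (Fin'.card : ℝ) ≤ γ * n →
          1 - 1 / (n : ℝ) ^ 3 ≤
            unifProb (fun ω : Fin n → NodeOrder n d =>
              (((Finset.univ.erase d).filter fun v : Fin n =>
                  s(v, firstElem (ω v)) ∈ Fin').card : ℝ) ≤ D * lg n) :=
  few_failed_first_failover_edges_general γ hγ1

end
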